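/- For the discriminant of the family x^3 + y^3 + yz^2 + βxy + α: the 3A₁ stratum is the curve 27α + β³ = 0; that is, for (α,β) with 27α + β³ = 0 and β ≠ 0, the polynomial f_{α,β} = x³+y³+yz²+βxy+α has a critical point with critical value 0 lying off the z-axis. -/
import Mathlib

/-- if 27α + β³ = 0 and β ≠ 0 then f = x³+y³+yz²+βxy+α has a
critical point with critical value 0 off the z-axis: a point with z = 0,
3x² + βy = 0, 3y² + βx = 0, f = 0 and (x,y) ≠ (0,0). -/
theorem stmt_13 (α β : ℂ) (h : 27 * α + β ^ 3 = 0) (hβ : β ≠ 0) :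
    ∃ x y : ℂ, (x, y) ≠ (0, 0) ∧
      3 * x ^ 2 + β * y = 0 ∧
      3 * y ^ 2 + β * x = 0 ∧
      x ^ 3 + y ^ 3 + β * x * y + α = 0 := by
  refine ⟨-β/3, -β/3, ?_, by ring, by ring, by linear_combination h / 27⟩
  simp only [Ne, Prod.mk.injEq, not_and]
  intro hx
  exact absurd (by field_simp at hx; simpa using hx) hβ
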